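/- For all real a > 0, γ ≥ 1 and n ≥ 1, the area A(a, γ, n) of the triangle of degree n satisfies A(a, γ, n) ≤ (1/2)·a²·γ, with equality if and only if n = 2; that is, among all degrees n ≥ 1 with the side length a and side ratio γ fixed, the standard (right-angled) Pythagorean theorem n = 2 yields the triangle of maximum area. -/
import Mathlib

/-- The area of the triangle with sides `a` and `γa` realizing the `n`-degree
Pythagorean theorem `a^n + (γa)^n = c^n`, `c = a·(γ^n + 1)^(1/n)`. -/
noncomputable def pythArea (a γ n : ℝ) : ℝ :=
  (a / 2) ^ 2 * Real.sqrt (4 * γ ^ 2 - (γ ^ 2 + 1 - (γ ^ n + 1) ^ (2 / n)) ^ 2)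

lemma key_sub (A r : ℝ) (hA : 0 < A) (hr0 : 0 < r) (hr1 : r < 1) :
    (A + 1) ^ r < A ^ r + 1 := by
  have hA1 : (0:ℝ) < A + 1 := by linarith
  have h1 : (A + 1) ^ r = A * (A + 1) ^ (r - 1) + (A + 1) ^ (r - 1) := by
    have : (A + 1) ^ r = (A + 1) ^ (1 + (r - 1)) := by ring_nf
    rw [this, Real.rpow_add hA1, Real.rpow_one]; ring
  have h2 : (A + 1) ^ (r - 1) < A ^ (r - 1) :=
    Real.rpow_lt_rpow_of_neg hA (by linarith) (by linarith)
  have h3 : (A + 1) ^ (r - 1) < 1 :=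
    Real.rpow_lt_one_of_one_lt_of_neg (by linarith) (by linarith)
  have h4 : A * A ^ (r - 1) = A ^ r := by
    nth_rewrite 1 [← Real.rpow_one A]
    rw [← Real.rpow_add hA]; ring_nf
  nlinarith [h2, h3]

lemma mono_lem (γ p q : ℝ) (hγ : 1 < γ) (hp : 0 < p) (hpq : p < q) :
    (γ ^ q + 1) ^ (p / q) < γ ^ p + 1 := by
  have hq : 0 < q := lt_trans hp hpq
  have hγ0 : (0:ℝ) < γ := by linarith
  have hA : 0 < γ ^ q := Real.rpow_pos_of_pos hγ0 q
  have hr0 : 0 < p / q := div_pos hp hq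
  have hr1 : p / q < 1 := (div_lt_one hq).2 hpq
  have h := key_sub (γ ^ q) (p / q) hA hr0 hr1
  have h2 : (γ ^ q) ^ (p / q) = γ ^ p := by
    rw [← Real.rpow_mul (le_of_lt hγ0)]
    congr 1
    field_simp
  rw [h2] at h; exact h

lemma ne_lem (γ n : ℝ) (hγ : 1 ≤ γ) (hn : 1 ≤ n) (hne : n ≠ 2) :
    (γ ^ n + 1) ^ (2 / n) ≠ γ ^ (2:ℝ) + 1 := by
  have hn0 : (0:ℝ) < n := by linarith
  rcases eq_or_lt_of_le hγ with h1 | h1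
  · rw [← h1]
    simp only [Real.one_rpow]
    intro h
    have h2 : (2:ℝ) ^ (2 / n) = (2:ℝ) ^ (1:ℝ) := by
      rw [Real.rpow_one]; norm_num at h ⊢; exact h
    have hne' : 2 / n ≠ 1 := by
      intro hne''
      apply hne
      field_simp at hne''
      linarith
    rcases lt_or_gt_of_ne hne' with h3 | h3
    · have := (Real.rpow_lt_rpow_left_iff (x := 2) (by norm_num)).2 h3
      rw [h2] at this; exact lt_irrefl _ this
    · have := (Real.rpow_lt_rpow_left_iff (x := 2) (by norm_num)).2 h3
      rw [h2] at this; exact lt_irrefl _ this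
  · rcases lt_trichotomy n 2 with h2 | h2 | h2
    · -- n < 2 : γ^2+1 < (γ^n+1)^(2/n)
      have h3 := mono_lem γ n 2 h1 hn0 h2
      have hb : (0:ℝ) < (γ ^ (2:ℝ) + 1) := by
        have := Real.rpow_pos_of_pos (by linarith : (0:ℝ) < γ) (2:ℝ)
        linarith
      have h4 : ((γ ^ (2:ℝ) + 1) ^ (n / 2)) ^ (2 / n) < (γ ^ n + 1) ^ (2 / n) := by
        apply Real.rpow_lt_rpow (le_of_lt (Real.rpow_pos_of_pos hb _)) h3
        positivity
      have h5 : ((γ ^ (2:ℝ) + 1) ^ (n / 2)) ^ (2 / n) = γ ^ (2:ℝ) + 1 := by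
        rw [← Real.rpow_mul (le_of_lt hb)]
        have : n / 2 * (2 / n) = 1 := by field_simp
        rw [this, Real.rpow_one]
      rw [h5] at h4
      exact (ne_of_gt h4)
    · exact absurd h2 hne
    · exact ne_of_lt (mono_lem γ 2 n h1 (by norm_num) h2)

theorem stmt_16 (a γ n : ℝ) (ha : 0 < a) (hγ : 1 ≤ γ) (hn : 1 ≤ n) :
    pythArea a γ n ≤ 1 / 2 * a ^ 2 * γ ∧
      (pythArea a γ n = 1 / 2 * a ^ 2 * γ ↔ n = 2) := by
  have hγ0 : (0:ℝ) < γ := by linarith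
  set X : ℝ := γ ^ 2 + 1 - (γ ^ n + 1) ^ (2 / n) with hX
  set D : ℝ := 4 * γ ^ 2 - X ^ 2 with hD
  have hsq : Real.sqrt (4 * γ ^ 2) = 2 * γ := by
    rw [show (4:ℝ) * γ ^ 2 = (2 * γ) ^ 2 by ring, Real.sqrt_sq (by linarith)]
  have hle : Real.sqrt D ≤ 2 * γ := by
    rw [← hsq]
    apply Real.sqrt_le_sqrt
    nlinarith [sq_nonneg X]
  have hnn : 0 ≤ Real.sqrt D := Real.sqrt_nonneg _
  have harea : pythArea a γ n = (a / 2) ^ 2 * Real.sqrt D := rfl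
  constructor
  · rw [harea]; nlinarith
  · rw [harea]
    constructor
    · intro h
      have hs : Real.sqrt D = 2 * γ := by
        have ha2 : (0:ℝ) < (a / 2) ^ 2 := by positivity
        have : (a / 2) ^ 2 * Real.sqrt D = (a / 2) ^ 2 * (2 * γ) := by
          rw [h]; ring
        exact mul_left_cancel₀ (ne_of_gt ha2) this
      have hD0 : 0 ≤ D := by
        by_contra hc
        push_neg at hc
        rw [Real.sqrt_eq_zero_of_nonpos (le_of_lt hc)] at hs
        nlinarith
      have hDval : D = 4 * γ ^ 2 := by
        have := Real.sq_sqrt hD0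
        rw [hs] at this
        nlinarith
      have hX0 : X = 0 := by nlinarith [sq_nonneg X]
      by_contra hne
      apply ne_lem γ n hγ hn hne
      rw [Real.rpow_two]
      rw [hX] at hX0; linarith
    · intro h
      subst h
      have hX0 : X = 0 := by
        rw [hX]
        have : ((2:ℝ) / 2) = (1:ℝ) := by norm_num
        rw [this, Real.rpow_one, Real.rpow_two]
        ring
      rw [hD, hX0, show (4:ℝ) * γ ^ 2 - 0 ^ 2 = 4 * γ ^ 2 by ring, hsq]
      ring
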